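/- arXiv:1608.03883 — 6 statements merged into one kernel-verified Lean document; each statement's English description precedes it below -/
import Mathlib

section
/- For any infinite compact Hausdorff spaces K and L, the spaces C_w(K) and C_p(L) are not uniformly homeomorphic: there is no bijection Φ : C(K) → C(L) such that Φ is uniformly continuous from C_w(K) to C_p(L) and Φ⁻¹ is uniformly continuous from C_p(L) to C_w(K). -/
/-- The uniformity on `C(K, ℝ)` associated with the weak topology of the Banach space `C(K)`:
the uniformity of uniform convergence on the functionals, i.e. with basic entourages
`{(f,g) : |μ (f - g)| < ε for μ ∈ F}`, `F` finite. It is induced by the canonical map into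
the product `(C(K,ℝ) →L[ℝ] ℝ) → ℝ` with the product uniformity. -/
noncomputable def weakUniformity (K : Type*) [TopologicalSpace K] [CompactSpace K] :
    UniformSpace C(K, ℝ) :=
  UniformSpace.comap (fun f (μ : C(K, ℝ) →L[ℝ] ℝ) => μ f) (Pi.uniformSpace fun _ => ℝ)

/-- The uniformity of pointwise convergence on `C(L, ℝ)`, inherited from the product
uniformity on `L → ℝ`. -/
noncomputable def pointwiseUniformity (L : Type*) [TopologicalSpace L] :
    UniformSpace C(L, ℝ) :=
  UniformSpace.comap (fun f : C(L, ℝ) => (f : L → ℝ)) (Pi.uniformSpace fun _ => ℝ)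

/-!
Uniform homeomorphisms preserve totally bounded sets. In `C_w(K)` these are exactly the
norm-bounded sets (Banach–Steinhaus), which have the countable cofinal family of balls.
In `C_p(L)` they are the pointwise bounded sets, and for infinite `L` no countable family of them
is cofinal: given bounds at points `x n` chosen in pairwise disjoint open sets `U n`, bump
functions supported in `U n` that exceed the `n`-th bound at `x n` form a pointwise bounded family.
-/

open Set Bornology Function Metric

theorem totallyBounded_pi_iff {ι : Type*} {α : ι → Type*} [∀ i, PseudoMetricSpace (α i)]
    [∀ i, ProperSpace (α i)] {S : Set (∀ i, α i)} :
    TotallyBounded S ↔ ∀ i, IsBounded (eval i '' S) :=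
  ⟨fun h i => (h.image (Pi.uniformContinuous_proj α i)).isBounded, fun h =>
    (isCompact_univ_pi fun i => (h i).isCompact_closure).totallyBounded.subset
      fun _ hx => mem_univ_pi.2 fun _ => subset_closure (mem_image_of_mem _ hx)⟩

section StrongDual

variable {𝕜 E : Type*} [RCLike 𝕜] [NormedAddCommGroup E] [NormedSpace 𝕜 E]

theorem isBounded_of_forall_isBounded_image_strongDual {S : Set E}
    (h : ∀ μ : StrongDual 𝕜 E, IsBounded (μ '' S)) : IsBounded S := by
  have hpointwise : ∀ μ : StrongDual 𝕜 E,
      ∃ C, ∀ x : S, ‖NormedSpace.inclusionInDoubleDual 𝕜 E x μ‖ ≤ C := fun μ =>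
    (isBounded_iff_forall_norm_le.1 (h μ)).imp fun _ hC x => hC _ (mem_image_of_mem μ x.2)
  obtain ⟨C, hC⟩ := banach_steinhaus hpointwise
  refine isBounded_iff_forall_norm_le.2 ⟨C, fun x hx => ?_⟩
  rw [← (NormedSpace.inclusionInDoubleDualLi 𝕜 (E := E)).norm_map x]
  exact hC ⟨x, hx⟩

theorem totallyBounded_image_strongDual_eval_iff {S : Set E} :
    TotallyBounded ((fun x (μ : StrongDual 𝕜 E) => μ x) '' S) ↔ IsBounded S := by
  simp only [totallyBounded_pi_iff, image_image, eval]
  exact ⟨isBounded_of_forall_isBounded_image_strongDual,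
    fun h μ => μ.lipschitz.isBounded_image h⟩

end StrongDual

theorem totallyBounded_weakUniformity_iff {K : Type*} [TopologicalSpace K] [CompactSpace K]
    {S : Set C(K, ℝ)} : @TotallyBounded _ (weakUniformity K) S ↔ IsBounded S :=
  (@totallyBounded_image_iff _ _ (weakUniformity K) _ _ _
    (@IsUniformInducing.mk _ _ (weakUniformity K) _ _ rfl)).symm.trans
      totallyBounded_image_strongDual_eval_iff

section Pointwise

variable {L : Type*} [TopologicalSpace L]

theorem totallyBounded_pointwiseUniformity_iff {S : Set C(L, ℝ)} :
    @TotallyBounded _ (pointwiseUniformity L) S ↔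
      ∀ y, IsBounded ((fun f : C(L, ℝ) => f y) '' S) := by
  rw [← @totallyBounded_image_iff _ _ (pointwiseUniformity L) _ _ _
    (@IsUniformInducing.mk _ _ (pointwiseUniformity L) _ _ rfl), totallyBounded_pi_iff]
  simp only [image_image, eval]

theorem exists_continuousMap_eq_and_eqOn_compl [CompletelyRegularSpace L] {U : Set L}
    (hU : IsOpen U) {x : L} (hx : x ∈ U) (c : ℝ) :
    ∃ g : C(L, ℝ), g x = c ∧ EqOn g 0 Uᶜ := by
  obtain ⟨f, hf, hfx, hfU⟩ := CompletelyRegularSpace.completely_regular_isOpen x U hU hx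
  exact ⟨⟨fun y => c * (1 - f y), by fun_prop⟩, by simp [hfx], fun y hy => by simp [hfU hy]⟩

theorem exists_totallyBounded_pointwiseUniformity_forall_not_subset [T2Space L]
    [CompletelyRegularSpace L] [Infinite L] (S : ℕ → Set C(L, ℝ))
    (hS : ∀ n, @TotallyBounded _ (pointwiseUniformity L) (S n)) :
    ∃ T, @TotallyBounded _ (pointwiseUniformity L) T ∧ ∀ n, ¬ T ⊆ S n := by
  obtain ⟨U, hU, hUo, hUd⟩ := exists_seq_infinite_isOpen_pairwise_disjoint L
  choose x hx using fun n => (hU n).nonempty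
  choose C hC using fun n =>
    isBounded_iff_forall_norm_le.1 (totallyBounded_pointwiseUniformity_iff.1 (hS n) (x n))
  choose f hfx hfU using fun n => exists_continuousMap_eq_and_eqOn_compl (hUo n) (hx n) (C n + 1)
  have hf_eq_zero : ∀ {m n y}, m ≠ n → y ∈ U m → f n y = 0 := fun hmn hy =>
    hfU _ (disjoint_left.1 (hUd hmn) hy)
  refine ⟨range f, totallyBounded_pointwiseUniformity_iff.2 fun y => ?_, fun n hn => ?_⟩
  · rw [← range_comp]
    refine Finite.isBounded ?_
    by_cases hy : ∃ m, y ∈ U m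
    · obtain ⟨m, hm⟩ := hy
      refine (toFinite {0, f m y}).subset (range_subset_iff.2 fun n => ?_)
      rcases eq_or_ne m n with rfl | hmn
      · simp
      · simp [hf_eq_zero hmn hm]
    · exact (finite_singleton 0).subset (range_subset_iff.2 fun n => hfU n fun h => hy ⟨n, h⟩)
  · have hbound := hC n _ (mem_image_of_mem _ (hn (mem_range_self n)))
    rw [hfx, Real.norm_eq_abs] at hbound
    linarith [le_abs_self (C n + 1)]

end Pointwise

theorem statement0_general (K L : Type*)
    [TopologicalSpace K] [CompactSpace K]
    [TopologicalSpace L] [CompactSpace L] [T2Space L] [Infinite L] :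
    ¬ ∃ Φ : C(K, ℝ) ≃ C(L, ℝ),
        @UniformContinuous _ _ (weakUniformity K) (pointwiseUniformity L) Φ ∧
        @UniformContinuous _ _ (pointwiseUniformity L) (weakUniformity K) Φ.symm := by
  rintro ⟨Φ, hΦ, hΦsymm⟩
  have hballs : ∀ n : ℕ, @TotallyBounded _ (pointwiseUniformity L) (Φ '' closedBall 0 n) :=
    fun n => @TotallyBounded.image _ _ (weakUniformity K) (pointwiseUniformity L) _ _
      (totallyBounded_weakUniformity_iff.2 isBounded_closedBall) hΦ
  obtain ⟨T, hT, hTS⟩ := exists_totallyBounded_pointwiseUniformity_forall_not_subset _ hballs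
  have hT_bounded : IsBounded (Φ.symm '' T) := totallyBounded_weakUniformity_iff.1
    (@TotallyBounded.image _ _ (pointwiseUniformity L) (weakUniformity K) _ _ hT hΦsymm)
  obtain ⟨r, hr⟩ := hT_bounded.subset_closedBall 0
  obtain ⟨n, hn⟩ := exists_nat_ge r
  exact hTS n fun g hg => ⟨Φ.symm g,
    closedBall_subset_closedBall hn (hr (mem_image_of_mem _ hg)), Φ.apply_symm_apply g⟩

/-- For any infinite compact Hausdorff spaces `K` and `L`, the spaces `C_w(K)` and `C_p(L)`
are not uniformly homeomorphic. -/
theorem statement0 (K L : Type*)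
    [TopologicalSpace K] [CompactSpace K] [T2Space K] [Infinite K]
    [TopologicalSpace L] [CompactSpace L] [T2Space L] [Infinite L] :
    ¬ ∃ Φ : C(K, ℝ) ≃ C(L, ℝ),
        @UniformContinuous _ _ (weakUniformity K) (pointwiseUniformity L) Φ ∧
        @UniformContinuous _ _ (pointwiseUniformity L) (weakUniformity K) Φ.symm :=
  statement0_general K L
end

section
/- If X is an infinite-dimensional real Banach space, then X endowed with its weak topology has property (B). -/
/-!
Take `A n` to be the closed ball of radius `n`, viewed in the weak topology. It is weakly closed
because it is convex and norm closed (Mazur). It is weakly nowhere dense because every weak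
neighbourhood contains a whole affine line, along a nonzero vector annihilated by the finitely
many functionals defining the neighbourhood; such a vector exists in infinite dimension.
A weakly compact set is norm bounded by the uniform boundedness principle, applied to its image
in the bidual, so it lies in some `A n`.
-/

/-- A topological space `X` has property (B) if it can be covered by countably many closed
nowhere-dense sets `A n` such that every compact subset of `X` is contained in some `A n`. -/
def PropertyB (X : Type*) [TopologicalSpace X] : Prop :=
  ∃ A : ℕ → Set X,
    (∀ n, IsClosed (A n)) ∧ (∀ n, interior (A n) = ∅) ∧
    (⋃ n, A n) = Set.univ ∧
    ∀ C : Set X, IsCompact C → ∃ n, C ⊆ A n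

open Bornology Metric NormedSpace Topology

theorem LinearMap.exists_ne_zero_forall_eq_zero {K V ι : Type*} [Field K] [AddCommGroup V]
    [Module K V] [Finite ι] (hV : ¬ FiniteDimensional K V) (f : ι → V →ₗ[K] K) :
    ∃ v ≠ 0, ∀ i, f i v = 0 := by
  by_contra! h
  have hinj : Function.Injective (LinearMap.pi f) := by
    rw [← LinearMap.ker_eq_bot, Submodule.eq_bot_iff]
    intro v hv
    by_contra hv0
    obtain ⟨i, hi⟩ := h v hv0
    exact hi (congrFun hv i)
  exact hV (Module.Finite.of_injective _ hinj)

theorem WeakBilin.exists_ne_zero_forall_add_smul_mem {𝕜 E F : Type*} [NormedField 𝕜]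
    [AddCommGroup E] [Module 𝕜 E] [AddCommGroup F] [Module 𝕜 F] {B : E →ₗ[𝕜] F →ₗ[𝕜] 𝕜}
    (hE : ¬ FiniteDimensional 𝕜 E) {x : WeakBilin B} {U : Set (WeakBilin B)} (hU : U ∈ 𝓝 x) :
    ∃ y ≠ 0, ∀ t : 𝕜, x + t • y ∈ U := by
  obtain ⟨s, r, hr, hball⟩ := (B.weakBilin_withSeminorms.mem_nhds_iff x U).mp hU
  obtain ⟨y, hy0, hy⟩ := LinearMap.exists_ne_zero_forall_eq_zero hE fun f : s => B.flip f
  have hsy : s.sup B.toSeminormFamily y = 0 :=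
    le_antisymm (Seminorm.finset_sup_apply_le le_rfl fun f hf => by
      simpa [LinearMap.toSeminormFamily_apply] using hy ⟨f, hf⟩) (apply_nonneg _ _)
  refine ⟨y, hy0, fun t => hball ?_⟩
  rw [Seminorm.mem_ball, add_sub_cancel_left]
  calc s.sup B.toSeminormFamily (t • y) = ‖t‖ * s.sup B.toSeminormFamily y := map_smul_eq_mul _ _ _
    _ < r := by rwa [hsy, mul_zero]

theorem interior_toWeakSpace_image_eq_empty {𝕜 X : Type*} [NontriviallyNormedField 𝕜]
    [NormedAddCommGroup X] [NormedSpace 𝕜 X] (hX : ¬ FiniteDimensional 𝕜 X) {s : Set X}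
    (hs : IsBounded s) : interior (toWeakSpace 𝕜 X '' s) = ∅ := by
  refine Set.eq_empty_of_forall_notMem fun x hx => ?_
  set e := toWeakSpace 𝕜 X
  obtain ⟨y, hy0, hline⟩ : ∃ y : WeakSpace 𝕜 X, y ≠ 0 ∧ ∀ t : 𝕜, x + t • y ∈ e '' s :=
    WeakBilin.exists_ne_zero_forall_add_smul_mem hX (mem_interior_iff_mem_nhds.mp hx)
  replace hy0 : e.symm y ≠ 0 := e.symm.map_ne_zero_iff.mpr hy0
  obtain ⟨M, hM⟩ := isBounded_iff_forall_norm_le.mp hs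
  obtain ⟨t, ht⟩ := NormedField.exists_lt_norm 𝕜 ((M + ‖e.symm x‖) / ‖e.symm y‖)
  obtain ⟨z, hz, hzx⟩ := hline t
  have hlt : M + ‖e.symm x‖ < ‖t • e.symm y‖ := by
    rw [norm_smul]; exact (div_lt_iff₀ (norm_pos_iff.mpr hy0)).mp ht
  have hle : ‖t • e.symm y‖ ≤ M + ‖e.symm x‖ := calc
    ‖t • e.symm y‖ = ‖z - e.symm x‖ := by
      rw [← e.symm_apply_apply z, hzx, map_add, map_smul, add_sub_cancel_left]
    _ ≤ ‖z‖ + ‖e.symm x‖ := norm_sub_le _ _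
    _ ≤ M + ‖e.symm x‖ := by gcongr; exact hM z hz
  exact hlt.not_ge hle

theorem Convex.isClosed_toWeakSpace_image {𝕜 E : Type*} [RCLike 𝕜] [AddCommGroup E]
    [Module 𝕜 E] [Module ℝ E] [IsScalarTower ℝ 𝕜 E] [TopologicalSpace E]
    [IsTopologicalAddGroup E] [ContinuousSMul 𝕜 E] [LocallyConvexSpace ℝ E] {s : Set E}
    (hs : Convex ℝ s) (hc : IsClosed s) : IsClosed (toWeakSpace 𝕜 E '' s) := by
  rw [← hc.closure_eq, hs.toWeakSpace_closure 𝕜]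
  exact isClosed_closure

theorem IsCompact.isBounded_toWeakSpace_preimage {𝕜 X : Type*} [RCLike 𝕜] [NormedAddCommGroup X]
    [NormedSpace 𝕜 X] {C : Set (WeakSpace 𝕜 X)} (hC : IsCompact C) :
    IsBounded (toWeakSpace 𝕜 X ⁻¹' C) := by
  have hvN := (hC.image (inclusionInDoubleDualWeak 𝕜 X).continuous).isVonNBounded 𝕜
  have hb := WeakDual.isBounded_iff_isVonNBounded.mpr hvN
  exact ((inclusionInDoubleDualLi 𝕜).isometry.antilipschitz.isBounded_preimage hb).subset
    fun x hx => ⟨_, hx, rfl⟩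

theorem statement6_general (X : Type*) [NormedAddCommGroup X] [NormedSpace ℝ X]
    (hinf : ¬ FiniteDimensional ℝ X) :
    PropertyB (WeakSpace ℝ X) := by
  set e := toWeakSpace ℝ X
  refine ⟨fun n => e '' closedBall 0 n, fun n => ?_, fun n => ?_, ?_, fun C hC => ?_⟩
  · exact (convex_closedBall 0 n).isClosed_toWeakSpace_image isClosed_closedBall
  · exact interior_toWeakSpace_image_eq_empty hinf isBounded_closedBall
  · rw [← Set.image_iUnion, iUnion_closedBall_nat, Set.image_univ_of_surjective e.surjective]
  · obtain ⟨r, hr⟩ := (isBounded_iff_subset_closedBall 0).mp hC.isBounded_toWeakSpace_preimage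
    obtain ⟨n, hn⟩ := exists_nat_ge r
    refine ⟨n, fun z hz => ⟨e.symm z, ?_, e.apply_symm_apply z⟩⟩
    exact closedBall_subset_closedBall hn (hr (by simpa [e] using hz))

/-- If `X` is an infinite-dimensional real Banach space, then `X` endowed with its weak
topology has property (B). -/
theorem statement6 (X : Type*) [NormedAddCommGroup X] [NormedSpace ℝ X] [CompleteSpace X]
    (hinf : ¬ FiniteDimensional ℝ X) :
    PropertyB (WeakSpace ℝ X) :=
  statement6_general X hinf
end

section
/- Every non-scattered compact Hausdorff space contains a closed (hence compact) subspace which is dense-in-itself and has a countable π-base. -/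
/-- A topological space is scattered if every nonempty subset `S` contains a point
isolated in `S`. -/
def Scattered (X : Type*) [TopologicalSpace X] : Prop :=
  ∀ S : Set X, S.Nonempty → ∃ x ∈ S, ∃ U : Set X, IsOpen U ∧ U ∩ S = {x}

/-- Every non-scattered compact Hausdorff space contains a nonempty closed (hence compact)
subspace which is dense-in-itself (no isolated points) and has a countable π-base. -/
theorem statement11 (K : Type*) [TopologicalSpace K] [CompactSpace K] [T2Space K]
    (h : ¬ Scattered K) :
    ∃ C : Set K, C.Nonempty ∧ IsClosed C ∧
      (∀ x : C, ¬ IsOpen ({x} : Set C)) ∧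
      ∃ B : Set (Set C), B.Countable ∧
        (∀ b ∈ B, IsOpen b ∧ b.Nonempty) ∧
        ∀ U : Set C, IsOpen U → U.Nonempty → ∃ b ∈ B, b ⊆ U := by
  classical
  unfold Scattered at h
  push_neg at h
  obtain ⟨S, hSne, hS⟩ := h
  set D := closure S with hDdef
  have hDne : D.Nonempty := hSne.closure
  -- splitting lemma
  have hsplit : ∀ U : Set K, ∃ p : Set K × Set K, IsOpen U → (U ∩ D).Nonempty →
      IsOpen p.1 ∧ IsOpen p.2 ∧ (p.1 ∩ D).Nonempty ∧ (p.2 ∩ D).Nonempty ∧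
      closure p.1 ⊆ U ∧ closure p.2 ⊆ U ∧ Disjoint (closure p.1) (closure p.2) := by
    intro U
    by_cases hU : IsOpen U ∧ (U ∩ D).Nonempty
    · obtain ⟨hUo, x, hxU, hxD⟩ := hU
      have hy : ∃ y, y ∈ U ∩ D ∧ y ≠ x := by
        by_contra hco
        push_neg at hco
        have hUD : U ∩ D = {x} := by
          apply Set.Subset.antisymm
          · intro y hy; exact hco y hy
          · intro y hy; rw [Set.mem_singleton_iff] at hy; subst hy; exact ⟨hxU, hxD⟩
        have hUS : (U ∩ S).Nonempty := mem_closure_iff.mp hxD U hUo hxU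
        obtain ⟨y, hyU, hyS⟩ := hUS
        have hyx : y = x := by
          have : y ∈ U ∩ D := ⟨hyU, subset_closure hyS⟩
          rw [hUD] at this; exact this
        subst hyx
        have hUSx : U ∩ S = {y} := by
          apply Set.Subset.antisymm
          · intro z hz
            have : z ∈ U ∩ D := ⟨hz.1, subset_closure hz.2⟩
            rw [hUD] at this; exact this
          · intro z hz; rw [Set.mem_singleton_iff] at hz; subst hz; exact ⟨hyU, hyS⟩
        exact hS y hyS U hUo hUSx
      obtain ⟨y, ⟨hyU, hyD⟩, hyx⟩ := hy
      obtain ⟨V', W', hV'o, hW'o, hxV', hyW', hVW⟩ := t2_separation hyx.symm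
      obtain ⟨V, hVo, hxV, hVcl⟩ := normal_exists_closure_subset (isClosed_singleton (x := x))
        (hUo.inter hV'o) (by simpa using Set.mem_inter hxU hxV')
      obtain ⟨W, hWo, hyW, hWcl⟩ := normal_exists_closure_subset (isClosed_singleton (x := y))
        (hUo.inter hW'o) (by simpa using Set.mem_inter hyU hyW')
      refine ⟨(V, W), fun _ _ => ⟨hVo, hWo, ⟨x, hxV rfl, hxD⟩, ⟨y, hyW rfl, hyD⟩,
        hVcl.trans Set.inter_subset_left, hWcl.trans Set.inter_subset_left, ?_⟩⟩
      exact Set.disjoint_of_subset (hVcl.trans Set.inter_subset_right)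
        (hWcl.trans Set.inter_subset_right) hVW
    · exact ⟨(∅, ∅), fun h1 h2 => absurd ⟨h1, h2⟩ hU⟩
  choose f hf using hsplit
  set T : List Bool → Set K :=
    fun s => s.foldr (fun b U => if b then (f U).1 else (f U).2) Set.univ with hTdef
  have hTcons : ∀ (b : Bool) (s : List Bool),
      T (b :: s) = if b then (f (T s)).1 else (f (T s)).2 := fun b s => rfl
  have hT : ∀ s : List Bool, IsOpen (T s) ∧ (T s ∩ D).Nonempty := by
    intro s
    induction s with
    | nil =>
      refine ⟨isOpen_univ, ?_⟩
      rw [show T [] = Set.univ from rfl, Set.univ_inter]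
      exact hDne
    | cons b s ih =>
      have hfs := hf (T s) ih.1 ih.2
      rw [hTcons]
      cases b
      · simpa using ⟨hfs.2.1, hfs.2.2.2.1⟩
      · simpa using ⟨hfs.1, hfs.2.2.1⟩
  have hchild : ∀ (b : Bool) (s : List Bool), closure (T (b :: s)) ⊆ T s := by
    intro b s
    have hfs := hf (T s) (hT s).1 (hT s).2
    rw [hTcons]
    cases b
    · simpa using hfs.2.2.2.2.2.1
    · simpa using hfs.2.2.2.2.1
  have hdisjc : ∀ s : List Bool,
      Disjoint (closure (T (true :: s))) (closure (T (false :: s))) := by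
    intro s
    have hfs := hf (T s) (hT s).1 (hT s).2
    rw [hTcons, hTcons]
    simpa using hfs.2.2.2.2.2.2
  -- Zorn: minimal closed set meeting every cell's closure
  set F : Set (Set K) := {C | IsClosed C ∧ ∀ s : List Bool, (C ∩ closure (T s)).Nonempty}
    with hFdef
  have huniv : Set.univ ∈ F := by
    refine ⟨isClosed_univ, fun s => ?_⟩
    obtain ⟨x, hx, _⟩ := (hT s).2
    exact ⟨x, Set.mem_univ x, subset_closure hx⟩
  obtain ⟨m, -, hmF, hmin⟩ := zorn_superset_nonempty F (fun c hcF hchain hcne => by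
    refine ⟨⋂₀ c, ⟨isClosed_sInter fun C hC => (hcF hC).1, fun s => ?_⟩,
      fun C hC => Set.sInter_subset_of_mem hC⟩
    have : Nonempty c := hcne.to_subtype
    have hne : (⋂ C : c, ((C : Set K) ∩ closure (T s))).Nonempty := by
      apply IsCompact.nonempty_iInter_of_directed_nonempty_isCompact_isClosed
      · intro C1 C2
        rcases hchain.total C1.2 C2.2 with hle | hle
        · exact ⟨C1, le_refl _, Set.inter_subset_inter_left _ hle⟩
        · exact ⟨C2, Set.inter_subset_inter_left _ hle, le_refl _⟩
      · exact fun C => (hcF C.2).2 s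
      · exact fun C => (((hcF C.2).1.inter isClosed_closure)).isCompact
      · exact fun C => (hcF C.2).1.inter isClosed_closure
    obtain ⟨x, hx⟩ := hne
    simp only [Set.mem_iInter, Set.mem_inter_iff] at hx
    exact ⟨x, fun C hC => (hx ⟨C, hC⟩).1, (hx ⟨hcne.choose, hcne.choose_spec⟩).2⟩)
    Set.univ huniv
  obtain ⟨hmcl, hmmeet⟩ := hmF
  -- key consequence of minimality
  have hkey : ∀ W : Set K, IsOpen W → (m ∩ W).Nonempty →
      ∃ s : List Bool, m ∩ closure (T s) ⊆ W := by
    intro W hWo hmW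
    by_contra hco
    push_neg at hco
    have hm' : (m ∩ Wᶜ) ∈ F := by
      refine ⟨hmcl.inter (isClosed_compl_iff.mpr hWo), fun s => ?_⟩
      obtain ⟨x, hxm, hxs⟩ := Set.not_subset.mp (hco s)
      exact ⟨x, ⟨⟨hxm.1, hxs⟩, hxm.2⟩⟩
    have hmm := hmin hm' Set.inter_subset_left
    obtain ⟨x, hxm, hxW⟩ := hmW
    have : x ∈ m ∩ Wᶜ := hmm hxm
    exact this.2 hxW
  have hmT : ∀ s : List Bool, (m ∩ T s).Nonempty := by
    intro s
    obtain ⟨x, hxm, hxc⟩ := hmmeet (true :: s)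
    exact ⟨x, hxm, hchild true s hxc⟩
  refine ⟨m, ?_, hmcl, ?_, ?_⟩
  · obtain ⟨x, hx, _⟩ := hmmeet []
    exact ⟨x, hx⟩
  · -- no isolated points
    rintro x hx
    rw [isOpen_induced_iff] at hx
    obtain ⟨W, hWo, hW⟩ := hx
    have hxW : (x : K) ∈ W := by
      have : x ∈ Subtype.val ⁻¹' W := hW.symm ▸ rfl
      exact this
    have hsub : m ∩ W ⊆ {(x : K)} := by
      rintro y ⟨hym, hyW⟩
      have : (⟨y, hym⟩ : m) ∈ Subtype.val ⁻¹' W := hyW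
      rw [hW] at this
      simpa using congrArg Subtype.val this
    obtain ⟨s, hs⟩ := hkey W hWo ⟨x, x.2, hxW⟩
    have hsx : m ∩ closure (T s) ⊆ {(x : K)} := fun y hy => hsub ⟨hy.1, hs hy⟩
    have htrue : (x : K) ∈ closure (T (true :: s)) := by
      obtain ⟨y, hym, hyc⟩ := hmmeet (true :: s)
      have : y ∈ m ∩ closure (T s) := ⟨hym, subset_closure (hchild true s hyc)⟩
      have heq := hsx this
      rw [Set.mem_singleton_iff] at heq
      exact heq ▸ hyc
    have hfalse : (x : K) ∈ closure (T (false :: s)) := by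
      obtain ⟨y, hym, hyc⟩ := hmmeet (false :: s)
      have : y ∈ m ∩ closure (T s) := ⟨hym, subset_closure (hchild false s hyc)⟩
      have heq := hsx this
      rw [Set.mem_singleton_iff] at heq
      exact heq ▸ hyc
    exact Set.disjoint_left.mp (hdisjc s) htrue hfalse
  · -- countable π-base
    refine ⟨Set.range (fun s : List Bool => (Subtype.val ⁻¹' (T s) : Set m)),
      Set.countable_range _, ?_, ?_⟩
    · rintro b ⟨s, rfl⟩
      refine ⟨(hT s).1.preimage continuous_subtype_val, ?_⟩
      obtain ⟨y, hym, hyT⟩ := hmT s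
      exact ⟨⟨y, hym⟩, hyT⟩
    · intro U hUo hUne
      rw [isOpen_induced_iff] at hUo
      obtain ⟨W, hWo, hW⟩ := hUo
      obtain ⟨x, hxU⟩ := hUne
      have hxW : (x : K) ∈ W := by rw [← hW] at hxU; exact hxU
      obtain ⟨s, hs⟩ := hkey W hWo ⟨x, x.2, hxW⟩
      refine ⟨Subtype.val ⁻¹' (T s), ⟨s, rfl⟩, ?_⟩
      intro y hy
      rw [← hW]
      exact hs ⟨y.2, subset_closure hy⟩
end

section
/- For any non-scattered compact Hausdorff space K, the space C_p(K) has property (B). -/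
/-- The topology of pointwise convergence on `C(K, ℝ)`. -/
noncomputable def pointwiseTopology (K : Type*) [TopologicalSpace K] :
    TopologicalSpace C(K, ℝ) :=
  TopologicalSpace.induced (fun f : C(K, ℝ) => (f : K → ℝ)) Pi.topologicalSpace

open Set Filter Topology

theorem CantorScheme.infinite_of_nonempty {α β : Type*} [Nontrivial β] {A : List β → Set α}
    (hne : ∀ l, (A l).Nonempty) (hanti : CantorScheme.Antitone A)
    (hdisj : CantorScheme.Disjoint A) (l : List β) : (A l).Infinite := by
  obtain ⟨a, b, hab⟩ := exists_pair_ne β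
  have key : ∀ n : ℕ, ∀ l, (n : ℕ∞) ≤ (A l).encard := by
    intro n
    induction n with
    | zero => simp
    | succ n ih =>
      intro l
      calc ((n + 1 : ℕ) : ℕ∞) ≤ (A (a :: l)).encard + (A (b :: l)).encard := by
            push_cast
            exact add_le_add (ih _) (one_le_encard_iff_nonempty.2 (hne _))
        _ = (A (a :: l) ∪ A (b :: l)).encard := (encard_union_eq (hdisj l hab)).symm
        _ ≤ (A l).encard := encard_le_encard (union_subset (hanti l a) (hanti l b))
  exact encard_eq_top_iff.1 (ENat.eq_top_iff_forall_ge.2 fun n => key n l)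

section Scheme

variable {X : Type*} [TopologicalSpace X]

theorem exists_isOpen_disjoint_closure_subset [T3Space X] {x y : X} (hxy : x ≠ y) {V : Set X}
    (hV : IsOpen V) (hx : x ∈ V) (hy : y ∈ V) :
    ∃ U W : Set X, IsOpen U ∧ IsOpen W ∧ x ∈ U ∧ y ∈ W ∧ closure U ⊆ V ∧ closure W ⊆ V ∧
      Disjoint U W := by
  obtain ⟨U₀, W₀, hU₀, hW₀, hxU₀, hyW₀, hUW₀⟩ := t2_separation hxy
  obtain ⟨U, ⟨hxU, hU⟩, hUsub⟩ :=
    (hasBasis_opens_closure x).mem_iff.1 (inter_mem (hV.mem_nhds hx) (hU₀.mem_nhds hxU₀))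
  obtain ⟨W, ⟨hyW, hW⟩, hWsub⟩ :=
    (hasBasis_opens_closure y).mem_iff.1 (inter_mem (hV.mem_nhds hy) (hW₀.mem_nhds hyW₀))
  refine ⟨U, W, hU, hW, hxU, hyW, hUsub.trans inter_subset_left, hWsub.trans inter_subset_left,
    hUW₀.mono ?_ ?_⟩
  · exact subset_closure.trans (hUsub.trans inter_subset_right)
  · exact subset_closure.trans (hWsub.trans inter_subset_right)

theorem exists_cantorScheme_of_not_scattered [T3Space X] (h : ¬ Scattered X) :
    ∃ c : List Bool → Set X, (∀ l, (c l).Nonempty) ∧ CantorScheme.ClosureAntitone c ∧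
      CantorScheme.Disjoint c := by
  simp only [Scattered, not_forall, not_exists, not_and, exists_prop] at h
  obtain ⟨S, hSne, hS⟩ := h
  have split : ∀ V : {V : Set X // IsOpen V ∧ (V ∩ S).Nonempty},
      ∃ W : Bool → {V : Set X // IsOpen V ∧ (V ∩ S).Nonempty},
        (∀ b, closure (W b).1 ⊆ V.1) ∧ Disjoint (W false).1 (W true).1 := by
    rintro ⟨V, hV, y, hyV, hyS⟩
    obtain ⟨z, ⟨hzV, hzS⟩, hzy⟩ : ∃ z ∈ V ∩ S, z ≠ y := by
      by_contra! hV'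
      exact hS y hyS V hV (Subset.antisymm (fun z hz => hV' z hz)
        (singleton_subset_iff.2 ⟨hyV, hyS⟩))
    obtain ⟨U, W, hU, hW, hyU, hzW, hUV, hWV, hUW⟩ :=
      exists_isOpen_disjoint_closure_subset hzy.symm hV hyV hzV
    exact ⟨fun b => bif b then ⟨W, hW, z, hzW, hzS⟩ else ⟨U, hU, y, hyU, hyS⟩,
      Bool.forall_bool.2 ⟨hUV, hWV⟩, hUW⟩
  choose W hWsub hWdisj using split
  let c : List Bool → {V : Set X // IsOpen V ∧ (V ∩ S).Nonempty} :=
    List.foldr (fun b V => W V b) ⟨univ, isOpen_univ, by simpa using hSne⟩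
  refine ⟨fun l => (c l).1, fun l => (c l).2.2.mono inter_subset_left,
    fun l b => hWsub (c l) b, fun l a b hab => ?_⟩
  cases a <;> cases b
  · exact absurd rfl hab
  · exact hWdisj (c l)
  · exact (hWdisj (c l)).symm
  · exact absurd rfl hab

end Scheme

section Minimal

variable {X : Type*} [TopologicalSpace X] {ι : Type*}

def ClosedMeetsAll (D : ι → Set X) (F : Set X) : Prop :=
  IsClosed F ∧ ∀ i, (F ∩ D i).Nonempty

theorem exists_minimal_closedMeetsAll [CompactSpace X] {D : ι → Set X} (hD : ∀ i, IsClosed (D i))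
    (hne : ∀ i, (D i).Nonempty) : ∃ L, Minimal (ClosedMeetsAll D) L := by
  have hchain : ∀ c ⊆ {F | ClosedMeetsAll D F}, IsChain (· ⊆ ·) c → c.Nonempty →
      ∃ lb ∈ {F | ClosedMeetsAll D F}, ∀ F ∈ c, lb ⊆ F := by
    rintro c hc hchain ⟨F₀, hF₀⟩
    have : Nonempty c := ⟨⟨F₀, hF₀⟩⟩
    refine ⟨⋂₀ c, ⟨isClosed_sInter fun F hF => (hc hF).1, fun i => ?_⟩,
      fun F hF => sInter_subset_of_mem hF⟩
    rw [sInter_eq_iInter, iInter_inter]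
    have hdir : Directed (· ⊇ ·) fun F : c => F.1 ∩ D i := fun F G =>
      (hchain.total F.2 G.2).elim (fun h => ⟨F, Subset.rfl, inter_subset_inter_left _ h⟩)
        (fun h => ⟨G, inter_subset_inter_left _ h, Subset.rfl⟩)
    exact IsCompact.nonempty_iInter_of_directed_nonempty_isCompact_isClosed _ hdir
      (fun F => (hc F.2).2 i) (fun F => ((hc F.2).1.inter (hD i)).isCompact)
      (fun F => (hc F.2).1.inter (hD i))
  obtain ⟨L, -, hL⟩ := zorn_superset_nonempty _ hchain univ
    ⟨isClosed_univ, fun i => by simpa using hne i⟩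
  exact ⟨L, hL⟩

theorem Minimal.exists_inter_subset_of_closedMeetsAll {D : ι → Set X} {L : Set X}
    (hL : Minimal (ClosedMeetsAll D) L) {O : Set X} (hO : IsOpen O) (hLO : (O ∩ L).Nonempty) :
    ∃ i, L ∩ D i ⊆ O := by
  by_contra! h
  obtain ⟨x, hxO, hxL⟩ := hLO
  have hmeets : ClosedMeetsAll D (L \ O) := ⟨hL.prop.1.sdiff hO, fun i => by
    obtain ⟨y, ⟨hyL, hyD⟩, hyO⟩ := not_subset.1 (h i)
    exact ⟨y, ⟨hyL, hyO⟩, hyD⟩⟩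
  exact (hL.eq_of_subset hmeets sdiff_subset ▸ hxL).2 hxO

end Minimal

section Pointwise

variable {K : Type*} [TopologicalSpace K]

/- Within this section `C(K, ℝ)` carries the topology of pointwise convergence, overriding the
compact-open topology of the global instance. -/
noncomputable local instance instTopologicalSpacePointwise : TopologicalSpace C(K, ℝ) :=
  pointwiseTopology K

theorem continuous_eval_pointwise (x : K) : Continuous fun g : C(K, ℝ) => g x :=
  (continuous_apply x).comp continuous_induced_dom

def boundedOn (U : Set K) (j : ℝ) : Set C(K, ℝ) :=
  {g | ∀ x ∈ U, |g x| ≤ j}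

theorem isClosed_boundedOn (U : Set K) (j : ℝ) : IsClosed (boundedOn U j) := by
  simp only [boundedOn, ofPred_forall]
  exact isClosed_biInter fun x _ => isClosed_le (continuous_eval_pointwise x).abs continuous_const

theorem interior_boundedOn_eq_empty [T1Space K] [NormalSpace K] {U : Set K} (hU : U.Infinite)
    (j : ℝ) : interior (boundedOn U j) = ∅ := by
  refine eq_empty_iff_forall_notMem.2 fun g hg => ?_
  rw [mem_interior_iff_mem_nhds, instTopologicalSpacePointwise, pointwiseTopology, nhds_induced,
    Filter.mem_comap, nhds_pi] at hg
  obtain ⟨T, hT, hTsub⟩ := hg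
  obtain ⟨I, hI, t, ht, hIt⟩ := Filter.mem_pi.1 hT
  obtain ⟨x₀, hx₀U, hx₀I⟩ := (hU.sdiff hI).nonempty
  obtain ⟨β, hβI, hβx₀, -⟩ := exists_continuous_zero_one_of_isClosed hI.isClosed
    isClosed_singleton (disjoint_singleton_right.2 hx₀I)
  have hmem : g + (j + 1 - g x₀) • β ∈ boundedOn U j := by
    refine hTsub (hIt fun x hx => ?_)
    simpa [hβI hx] using mem_of_mem_nhds (ht x)
  have hx₀ := hmem x₀ hx₀U
  simp only [ContinuousMap.add_apply, ContinuousMap.smul_apply, hβx₀ rfl, Pi.one_apply,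
    smul_eq_mul, mul_one, add_sub_cancel] at hx₀
  linarith [le_abs_self ((j : ℝ) + 1)]

theorem IsCompact.exists_nat_abs_apply_le {C : Set C(K, ℝ)} (hC : IsCompact C) (x : K) :
    ∃ j : ℕ, ∀ g ∈ C, |g x| ≤ j := by
  obtain ⟨b, hb⟩ := hC.exists_bound_of_continuousOn (continuous_eval_pointwise x).continuousOn
  obtain ⟨j, hj⟩ := exists_nat_ge b
  exact ⟨j, fun g hg => (hb g hg).trans hj⟩

theorem IsCompact.exists_isOpen_subset_boundedOn [CompactSpace K] [T2Space K] {C : Set C(K, ℝ)}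
    (hC : IsCompact C) {L : Set K} (hL : IsClosed L) (hLne : L.Nonempty) :
    ∃ O, IsOpen O ∧ (O ∩ L).Nonempty ∧ ∃ j : ℕ, C ⊆ boundedOn (O ∩ L) j := by
  let E : ℕ → Set L := fun j => {x | ∀ g ∈ C, |g x| ≤ j}
  have hE : ∀ j, IsClosed (E j) := fun j => by
    simp only [E, ofPred_forall]
    exact isClosed_biInter fun g _ =>
      isClosed_le (g.continuous.comp continuous_subtype_val).abs continuous_const
  have hEcover : ⋃ j, E j = univ :=
    eq_univ_of_forall fun x => mem_iUnion.2 (hC.exists_nat_abs_apply_le x.1)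
  have : CompactSpace L := isCompact_iff_compactSpace.1 hL.isCompact
  have : Nonempty L := hLne.to_subtype
  obtain ⟨j, y, hy⟩ := nonempty_interior_of_iUnion_of_closed hE hEcover
  obtain ⟨V, hVE, hV, hyV⟩ := mem_interior.1 hy
  obtain ⟨O, hO, rfl⟩ := isOpen_induced_iff.1 hV
  exact ⟨O, hO, ⟨y, hyV, y.2⟩, j, fun g hg x hx => hVE (show ⟨x, hx.2⟩ ∈ _ from hx.1) g hg⟩

theorem propertyB_of_infinite_piBase [CompactSpace K] [T2Space K] {ι : Type*} [Countable ι]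
    {U : ι → Set K} (hU : ∀ i, (U i).Infinite) {L : Set K} (hL : IsClosed L) (hLne : L.Nonempty)
    (hbase : ∀ O, IsOpen O → (O ∩ L).Nonempty → ∃ i, U i ⊆ O ∩ L) :
    PropertyB C(K, ℝ) := by
  obtain ⟨i₀, -⟩ := hbase univ isOpen_univ (by simpa using hLne)
  have : Nonempty ι := ⟨i₀⟩
  obtain ⟨e, he⟩ := exists_surjective_nat (ι × ℕ)
  refine ⟨fun n => boundedOn (U (e n).1) (e n).2, fun n => isClosed_boundedOn _ _,
    fun n => interior_boundedOn_eq_empty (hU _) _, eq_univ_of_forall fun g => ?_, fun C hC => ?_⟩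
  · obtain ⟨j, hj⟩ := exists_nat_ge ‖g‖
    obtain ⟨n, hn⟩ := he (i₀, j)
    refine mem_iUnion.2 ⟨n, ?_⟩
    simp only [hn]
    exact fun x _ => (g.norm_coe_le_norm x).trans hj
  · obtain ⟨O, hO, hOL, j, hCj⟩ := hC.exists_isOpen_subset_boundedOn hL hLne
    obtain ⟨i, hi⟩ := hbase O hO hOL
    obtain ⟨n, hn⟩ := he (i, j)
    refine ⟨n, ?_⟩
    simp only [hn]
    exact fun g hg x hx => hCj hg x (hi hx)

end Pointwise

/-- For any non-scattered compact Hausdorff space `K`, the space `C_p(K)` has property (B). -/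
theorem statement13 (K : Type*) [TopologicalSpace K] [CompactSpace K] [T2Space K]
    (h : ¬ Scattered K) :
    @PropertyB C(K, ℝ) (pointwiseTopology K) := by
  obtain ⟨c, hne, hanti, hdisj⟩ := exists_cantorScheme_of_not_scattered h
  obtain ⟨L, hL⟩ := exists_minimal_closedMeetsAll (D := fun l => closure (c l))
    (fun _ => isClosed_closure) (fun l => (hne l).closure)
  have hmeets (l : List Bool) : (L ∩ c l).Nonempty :=
    (hL.prop.2 (false :: l)).mono (inter_subset_inter_right L (hanti l false))
  refine propertyB_of_infinite_piBase (U := fun l => L ∩ c l)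
    (CantorScheme.infinite_of_nonempty hmeets
      (fun l b => inter_subset_inter_right L (hanti.antitone l b))
      (fun l _ _ hab => (hdisj l hab).mono inter_subset_right inter_subset_right))
    hL.prop.1 ((hmeets []).mono inter_subset_left) fun O hO hOL => ?_
  obtain ⟨l, hl⟩ := hL.exists_inter_subset_of_closedMeetsAll hO hOL
  exact ⟨l, fun x hx => ⟨hl ⟨hx.1, subset_closure hx.2⟩, hx.1⟩⟩
end

section
/- Let X be a sequential topological space. Suppose there is a countable collection {A_n : n ∈ ℕ} of closed nowhere-dense subsets of X whose union is X, such that for every sequence (x_i) of points of X converging to a point x there is n ∈ ℕ with {x_i : i ∈ ℕ} ∪ {x} ⊆ A_n. Then X has property (B). -/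
open Set Filter Topology

section

variable {X : Type*} [TopologicalSpace X]

lemma isClosed_accumulate {A : ℕ → Set X} (hclosed : ∀ n, IsClosed (A n)) (n : ℕ) :
    IsClosed (accumulate A n) :=
  (finite_Iic n).isClosed_biUnion fun i _ => hclosed i

lemma interior_accumulate_eq_empty {A : ℕ → Set X} (hclosed : ∀ n, IsClosed (A n))
    (hnwd : ∀ n, interior (A n) = ∅) (n : ℕ) : interior (accumulate A n) = ∅ := by
  induction n with
  | zero => simpa [accumulate] using hnwd 0
  | succ n ih =>
    rw [accumulate_succ,
      interior_union_isClosed_of_interior_empty (isClosed_accumulate hclosed n) (hnwd _), ih]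

theorem IsCountablyCompact.exists_tendsto_subseq [SequentialSpace X] {C : Set X}
    (hC : IsCountablyCompact C) {x : ℕ → X} (hx : ∀ n, x n ∈ C) :
    ∃ l, ∃ φ : ℕ → ℕ, StrictMono φ ∧ Tendsto (x ∘ φ) atTop (𝓝 l) := by
  by_contra! hconv
  obtain ⟨a, -, ha⟩ := hC.seq_clusterPt x (.of_forall hx)
  have h_tail (k : ℕ) : a ∈ ⋃ i ≥ k, closure {x i} := by
    rw [iUnion_ge_eq_iUnion_nat_add]
    have hclosed : IsClosed (⋃ i, closure {x (i + k)}) :=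
      isClosed_iUnion_closure_singleton_of_not_tendsto fun l φ hφ =>
        hconv l _ ((strictMono_id.add_const k).comp hφ)
    refine hclosed.closure_subset_iff.2 ?_ (mapClusterPt_atTop_iff_forall_mem_closure.1 ha k)
    rintro _ ⟨i, hi, rfl⟩
    obtain ⟨j, rfl⟩ := Nat.exists_eq_add_of_le' hi
    exact mem_iUnion_of_mem j (subset_closure rfl)
  obtain ⟨φ, hφ, hφa⟩ : ∃ φ : ℕ → ℕ, StrictMono φ ∧ ∀ n, a ∈ closure {x (φ n)} := by
    refine Nat.exists_strictMono_subsequence (P := fun n => a ∈ closure {x n}) fun N => ?_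
    obtain ⟨n, hn, han⟩ := mem_iUnion₂.1 (h_tail (N + 1))
    exact ⟨n, hn, han⟩
  exact hconv a φ hφ
    (Tendsto.specializes tendsto_const_nhds fun n => specializes_iff_mem_closure.2 (hφa n))

theorem exists_subset_accumulate_of_isCountablyCompact [SequentialSpace X] {A : ℕ → Set X}
    (hseq : ∀ (x : ℕ → X) (l : X), Tendsto x atTop (𝓝 l) → ∃ n, range x ⊆ A n)
    {C : Set X} (hC : IsCountablyCompact C) : ∃ n, C ⊆ accumulate A n := by
  by_contra! hC_not
  choose x hxC hxA using fun n => not_subset.1 (hC_not n)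
  obtain ⟨l, φ, hφ, hlim⟩ := hC.exists_tendsto_subseq hxC
  obtain ⟨m, hm⟩ := hseq _ l hlim
  have hxm : x (φ m) ∈ A m := hm (mem_range_self m)
  exact hxA (φ m) (accumulate_subset_accumulate (hφ.id_le m) (subset_accumulate hxm))

end

/-- Let `X` be a sequential space. Suppose `{A n : n ∈ ℕ}` is a countable collection of
closed nowhere-dense subsets covering `X` such that every convergent sequence, together
with its limit, is contained in some `A n`. Then `X` has property (B). -/
theorem statement17 (X : Type*) [TopologicalSpace X] [SequentialSpace X]
    (A : ℕ → Set X)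
    (hclosed : ∀ n, IsClosed (A n)) (hnwd : ∀ n, interior (A n) = ∅)
    (hcover : (⋃ n, A n) = Set.univ)
    (hseq : ∀ (x : ℕ → X) (l : X), Filter.Tendsto x Filter.atTop (nhds l) →
      ∃ n, Set.range x ∪ {l} ⊆ A n) :
    PropertyB X :=
  ⟨accumulate A, isClosed_accumulate hclosed, interior_accumulate_eq_empty hclosed hnwd,
    by rw [iUnion_accumulate, hcover], fun _ hC =>
    exists_subset_accumulate_of_isCountablyCompact
      (fun x l hl => (hseq x l hl).imp fun _ hn => subset_union_left.trans hn)
      hC.isCountablyCompact⟩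
end

section
/- Let X be an infinite-dimensional real Banach space. Then there exists a subset A of X such that every norm-bounded subset of A is finite, 0 ∉ A, and 0 belongs to the closure of A in the weak topology of X. -/
open Set Filter Module

/-- In a finite-dimensional subspace of dimension bigger than the number of functionals,
there is a unit vector killed by all of them. -/
lemma aux_ker_vec {X : Type*} [NormedAddCommGroup X] [NormedSpace ℝ X]
    (E : Submodule ℝ X) [FiniteDimensional ℝ E] (I : Finset (X →L[ℝ] ℝ))
    (h : I.card < finrank ℝ E) :
    ∃ y : E, ‖y‖ = 1 ∧ ∀ μ ∈ I, μ (y : X) = 0 := by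
  classical
  let φ : E →ₗ[ℝ] ({μ : X →L[ℝ] ℝ // μ ∈ I} → ℝ) :=
    { toFun := fun x μ => (μ.1 : X →L[ℝ] ℝ) (x : X)
      map_add' := by intros; funext μ; simp
      map_smul' := by intros; funext μ; simp }
  have hker : LinearMap.ker φ ≠ ⊥ := by
    intro hbot
    have hinj : Function.Injective φ := LinearMap.ker_eq_bot.1 hbot
    have hle := LinearMap.finrank_le_finrank_of_injective hinj
    rw [Module.finrank_pi] at hle
    simp only [Fintype.card_coe, Fintype.card_subtype] at hle
    omega
  obtain ⟨y0, hy0mem, hy0⟩ := (Submodule.ne_bot_iff _).1 hker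
  have hy0' : ∀ μ ∈ I, (μ : X →L[ℝ] ℝ) (y0 : X) = 0 := by
    intro μ hμ
    have : φ y0 = 0 := hy0mem
    exact congrFun this ⟨μ, hμ⟩
  have hn0 : ‖y0‖ ≠ 0 := by simpa using hy0
  refine ⟨‖y0‖⁻¹ • y0, ?_, ?_⟩
  · rw [norm_smul, norm_inv, norm_norm, inv_mul_cancel₀ hn0]
  · intro μ hμ
    have : ((‖y0‖⁻¹ • y0 : E) : X) = ‖y0‖⁻¹ • (y0 : X) := rfl
    rw [this, map_smul, hy0' μ hμ, smul_zero]

lemma aux_mem_closure {α : Type*} (τ : TopologicalSpace α) (C : Set α) (x : α)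
    (h : ∀ u ∈ @nhds α τ x, (u ∩ C).Nonempty) : x ∈ @closure α τ C := by
  letI := τ
  exact mem_closure_iff_nhds.2 h

/-- Let `X` be an infinite-dimensional real Banach space. Then there exists a set `A ⊆ X`
such that every norm-bounded subset of `A` is finite, `0 ∉ A`, and `0` belongs to the
closure of `A` in the weak topology of `X` (the coarsest topology making all continuous
linear functionals continuous). -/
theorem statement18 (X : Type*) [NormedAddCommGroup X] [NormedSpace ℝ X] [CompleteSpace X]
    (hinf : ¬ FiniteDimensional ℝ X) :
    ∃ A : Set X,
      (∀ B ⊆ A, Bornology.IsBounded B → B.Finite) ∧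
      (0 : X) ∉ A ∧
      (0 : X) ∈ @closure X (⨅ μ : X →L[ℝ] ℝ, TopologicalSpace.induced μ inferInstance) A := by
  classical
  have hrank : ∀ n : ℕ, (n : Cardinal) ≤ Module.rank ℝ X := by
    intro n
    have h1 : ¬ Module.rank ℝ X < Cardinal.aleph0 := by
      rw [Module.rank_lt_aleph0_iff]
      exact hinf
    exact le_trans (le_of_lt (Cardinal.nat_lt_aleph0 n)) (not_lt.1 h1)
  have hE : ∀ n : ℕ, ∃ E : Submodule ℝ X, FiniteDimensional ℝ E ∧ finrank ℝ E = n + 1 := by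
    intro n
    obtain ⟨f, hf⟩ := exists_linearIndependent_of_le_rank (hrank (n + 1))
    refine ⟨Submodule.span ℝ (Set.range f),
      FiniteDimensional.span_of_finite ℝ (Set.finite_range f), ?_⟩
    rw [finrank_span_eq_card hf, Fintype.card_fin]
  choose E hfd hfr using hE
  have hnet : ∀ n : ℕ, ∃ t : Set (E n), t ⊆ Metric.sphere 0 1 ∧ t.Finite ∧
      Metric.sphere (0 : E n) 1 ⊆ ⋃ y ∈ t, {x | dist x y < 1 / ((n : ℝ) + 1) ^ 2} := by
    intro n
    haveI := hfd n
    have hc : IsCompact (Metric.sphere (0 : E n) 1) := isCompact_sphere 0 1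
    obtain ⟨t, hts, htf, hcov⟩ := totallyBounded_iff_subset.1 hc.totallyBounded
      {p : E n × E n | dist p.1 p.2 < 1 / ((n : ℝ) + 1) ^ 2}
      (Metric.dist_mem_uniformity (by positivity))
    exact ⟨t, hts, htf, hcov⟩
  choose t hts htf hcov using hnet
  set A : Set X := ⋃ n : ℕ, (fun z : E n => ((n : ℝ) + 1) • (z : X)) '' (t n) with hA
  have hnorm : ∀ n, ∀ a ∈ (fun z : E n => ((n : ℝ) + 1) • (z : X)) '' (t n),
      ‖a‖ = (n : ℝ) + 1 := by
    rintro n a ⟨z, hz, rfl⟩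
    have h1 : ‖(z : X)‖ = 1 := by
      have := hts n hz
      simp only [Metric.mem_sphere, dist_zero_right] at this
      rwa [Submodule.norm_coe]
    simp only []
    rw [norm_smul, h1, mul_one, Real.norm_eq_abs, abs_of_pos (by positivity)]
  have key : ∀ (I : Finset (X →L[ℝ] ℝ)) (ε : ℝ), 0 < ε → ∃ a ∈ A, ∀ μ ∈ I, |μ a| < ε := by
    intro I ε hε
    obtain ⟨M, hM⟩ := (I.image (fun μ => ‖μ‖)).exists_le
    have hM' : ∀ μ ∈ I, ‖μ‖ ≤ M := fun μ hμ =>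
      hM _ (Finset.mem_image_of_mem _ hμ)
    set n := max I.card ⌈M / ε⌉₊ with hn
    haveI := hfd n
    obtain ⟨y, hy1, hyker⟩ := aux_ker_vec (E n) I (by rw [hfr n]; exact Nat.lt_succ_of_le (le_max_left _ _))
    have hy : y ∈ Metric.sphere (0 : E n) 1 := by
      simp [Metric.mem_sphere, dist_zero_right, hy1]
    obtain ⟨z, hz, hdz⟩ := Set.mem_iUnion₂.1 (hcov n hy)
    refine ⟨((n : ℝ) + 1) • (z : X), Set.mem_iUnion.2 ⟨n, ⟨z, hz, rfl⟩⟩, ?_⟩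
    intro μ hμ
    have hzy : ‖(z : X) - (y : X)‖ < 1 / ((n : ℝ) + 1) ^ 2 := by
      have h2 : dist (z : X) (y : X) = dist z y := rfl
      rw [← dist_eq_norm, h2, dist_comm]
      exact hdz
    have hval : μ (((n : ℝ) + 1) • (z : X)) = ((n : ℝ) + 1) * μ ((z : X) - (y : X)) := by
      rw [map_sub, hyker μ hμ, sub_zero, map_smul, smul_eq_mul]
    have hb : |μ ((z : X) - (y : X))| ≤ ‖μ‖ * ‖(z : X) - (y : X)‖ := by
      rw [← Real.norm_eq_abs]
      exact μ.le_opNorm _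
    have hnpos : (0 : ℝ) < (n : ℝ) + 1 := by positivity
    have hMn : M / ε ≤ (n : ℝ) := le_trans (Nat.le_ceil _) (by exact_mod_cast le_max_right I.card ⌈M / ε⌉₊)
    have hMlt : M < ε * ((n : ℝ) + 1) := by
      have : M ≤ ε * n := by
        rw [div_le_iff₀ hε] at hMn
        linarith [hMn]
      nlinarith
    rw [hval, abs_mul, abs_of_pos hnpos]
    calc ((n : ℝ) + 1) * |μ ((z : X) - (y : X))|
        ≤ ((n : ℝ) + 1) * (‖μ‖ * ‖(z : X) - (y : X)‖) := by
          apply mul_le_mul_of_nonneg_left hb (le_of_lt hnpos)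
      _ ≤ ((n : ℝ) + 1) * (M * (1 / ((n : ℝ) + 1) ^ 2)) := by
          apply mul_le_mul_of_nonneg_left _ (le_of_lt hnpos)
          apply mul_le_mul (hM' μ hμ) (le_of_lt hzy) (norm_nonneg _)
          exact le_trans (norm_nonneg _) (hM' μ hμ)
      _ = M / ((n : ℝ) + 1) := by field_simp
      _ < ε := by rw [div_lt_iff₀ hnpos]; linarith [hMlt]
  refine ⟨A, ?_, ?_, ?_⟩
  · intro B hBA hB
    obtain ⟨R, hR⟩ := hB.subset_closedBall 0
    have hsub : B ⊆ ⋃ n ∈ Finset.range ⌈R⌉₊, (fun z : E n => ((n : ℝ) + 1) • (z : X)) '' (t n) := by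
      intro a haB
      obtain ⟨s, ⟨n, rfl⟩, hn⟩ := (hBA haB)
      have hna : ‖a‖ = (n : ℝ) + 1 := hnorm n a hn
      have hRa : ‖a‖ ≤ R := by simpa [Metric.mem_closedBall, dist_zero_right] using hR haB
      refine Set.mem_iUnion₂.2 ⟨n, ?_, hn⟩
      rw [Finset.mem_range]
      apply Nat.lt_ceil.2
      have : (n : ℝ) < (n : ℝ) + 1 := lt_add_one _
      linarith [hna ▸ hRa]
    exact Set.Finite.subset (Set.Finite.biUnion (Finset.range ⌈R⌉₊).finite_toSet
      (fun n _ => (htf n).image _)) hsub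
  · intro h0
    obtain ⟨s, ⟨n, rfl⟩, hn⟩ := h0
    have := hnorm n 0 hn
    rw [norm_zero] at this
    have h1 : (0 : ℝ) < (n : ℝ) + 1 := by positivity
    linarith
  · apply aux_mem_closure
    intro s hs
    rw [_root_.nhds_iInf] at hs
    simp only [nhds_induced] at hs
    obtain ⟨I, hIfin, V, hV, -, hsubI, -⟩ := mem_iInf'.1 hs
    choose W hW hWV using fun μ => Filter.mem_comap.1 (hV μ)
    have hball : ∀ μ : X →L[ℝ] ℝ, ∃ ε > 0, Metric.ball (μ 0) ε ⊆ W μ := by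
      intro μ
      exact Metric.mem_nhds_iff.1 (hW μ)
    choose ε hεpos hεball using hball
    set J := hIfin.toFinset with hJ
    rcases J.eq_empty_or_nonempty with hJe | hJne
    · obtain ⟨a, haA, -⟩ := key ∅ 1 one_pos
      refine ⟨a, ?_, haA⟩
      rw [hsubI]
      apply Set.mem_iInter₂.2
      intro μ hμ
      exfalso
      have : μ ∈ J := hIfin.mem_toFinset.2 hμ
      rw [hJe] at this
      exact absurd this (Finset.notMem_empty μ)
    · set ε₀ := J.inf' hJne ε with hε₀
      have hε₀pos : 0 < ε₀ := by
        rw [hε₀, Finset.lt_inf'_iff]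
        intro μ _
        exact hεpos μ
      obtain ⟨a, haA, ha⟩ := key J ε₀ hε₀pos
      refine ⟨a, ?_, haA⟩
      rw [hsubI]
      apply Set.mem_iInter₂.2
      intro μ hμ
      have hμJ : μ ∈ J := hIfin.mem_toFinset.2 hμ
      apply hWV μ
      apply hεball μ
      rw [Metric.mem_ball, Real.dist_eq, map_zero, sub_zero]
      exact lt_of_lt_of_le (ha μ hμJ) (Finset.inf'_le _ hμJ)
end
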